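/- In the two-variable formal power series ring ℚ[[Z,W]] with two commuting square-root-of-one parameters ζ', ζ'' (i.e., working in (ℚ[ζ',ζ'']/(ζ'²−1, ζ''²−1))[[Z,W]]), the series ζ' + ζ'' − B0(ζ'Z)·ζ''·B1(ζ''W) − ζ'·B1(ζ'Z)·B0(ζ''W) is divisible by Z + W. -/

import Mathlib

open MvPowerSeries

/-- The coefficient of `T^m` in the Faber–Zagier series `B0`. -/
noncomputable def b0coeff (m : ℕ) : ℚ :=
  (-1) ^ m * (Nat.factorial (6 * m) : ℚ) /
    ((Nat.factorial (2 * m) : ℚ) * (Nat.factorial (3 * m) : ℚ))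

/-- The coefficient of `T^m` in the Faber–Zagier series `B1`. -/
noncomputable def b1coeff (m : ℕ) : ℚ :=
  (-1) ^ m * ((1 + 6 * (m : ℚ)) / (1 - 6 * (m : ℚ))) * (Nat.factorial (6 * m) : ℚ) /
    ((Nat.factorial (2 * m) : ℚ) * (Nat.factorial (3 * m) : ℚ))

section

variable (A : Type) [CommRing A] [Algebra ℚ A] (z₁ z₂ : A)

/-- `B0(ζ'Z)` as a two-variable power series (`Z` is the variable `0`, `W` is `1`). -/
noncomputable def B0Z : MvPowerSeries (Fin 2) A :=
  fun e => if e 1 = 0 then z₁ ^ (e 0) • algebraMap ℚ A (b0coeff (e 0)) else 0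

/-- `B1(ζ'Z)`. -/
noncomputable def B1Z : MvPowerSeries (Fin 2) A :=
  fun e => if e 1 = 0 then z₁ ^ (e 0) • algebraMap ℚ A (b1coeff (e 0)) else 0

/-- `B0(ζ''W)`. -/
noncomputable def B0W : MvPowerSeries (Fin 2) A :=
  fun e => if e 0 = 0 then z₂ ^ (e 1) • algebraMap ℚ A (b0coeff (e 1)) else 0

/-- `B1(ζ''W)`. -/
noncomputable def B1W : MvPowerSeries (Fin 2) A :=
  fun e => if e 0 = 0 then z₂ ^ (e 1) • algebraMap ℚ A (b1coeff (e 1)) else 0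

/-- The numerator `ζ' + ζ'' − B0(ζ'Z)·ζ''·B1(ζ''W) − ζ'·B1(ζ'Z)·B0(ζ''W)`. -/
noncomputable def edgeNumerator : MvPowerSeries (Fin 2) A :=
  (MvPowerSeries.C : A →+* MvPowerSeries (Fin 2) A) (z₁ + z₂)
    - B0Z A z₁ * (MvPowerSeries.C : A →+* MvPowerSeries (Fin 2) A) z₂ * B1W A z₂
    - (MvPowerSeries.C : A →+* MvPowerSeries (Fin 2) A) z₁ * B1Z A z₁ * B0W A z₂

end

/-
`Z + W` divides a series exactly when the substitution `W = -Z` kills it; after that substitution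
the numerator becomes `ζ' + ζ'' - ζ'' B0(ζ'T) B1(-ζ''T) - ζ' B1(ζ'T) B0(-ζ''T)`. The input from
the Faber–Zagier series is the reflection identity `B0(T) B1(-T) + B0(-T) B1(T) = 2`: `B0` solves
`(B0 + 432 T² B0')' = -60 B0` and `B1 = B0 + 144 T B0 + 864 T² B0'`, so the left side is twice a
Wronskian of `B0(T)` and `B0(-T)`, whose derivative vanishes. Since `2` is invertible, it suffices
to check the vanishing after multiplying by `ζ' + ζ''` and by `ζ' - ζ''`. In the first case
`ζ''` may be replaced by `ζ'` and the reflection identity at `ζ'T` applies; in the second `ζ''`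
may be replaced by `-ζ'`, and every term acquires the factor `ζ'² - ζ''² = 0`.
-/

lemma b0coeff_succ (m : ℕ) :
    ((m : ℚ) + 1) * b0coeff (m + 1) = -(12 * (6 * m + 1) * (6 * m + 5)) * b0coeff m := by
  have h6 : ((6 * (m + 1)).factorial : ℚ)
      = (6 * m + 1) * (6 * m + 2) * (6 * m + 3) * (6 * m + 4) * (6 * m + 5) * (6 * m + 6)
        * (6 * m).factorial := by
    rw [show 6 * (m + 1) = 6 * m + 5 + 1 by ring]
    push_cast [Nat.factorial_succ]
    ring
  have h2 : ((2 * (m + 1)).factorial : ℚ) = (2 * m + 1) * (2 * m + 2) * (2 * m).factorial := by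
    rw [show 2 * (m + 1) = 2 * m + 1 + 1 by ring]
    push_cast [Nat.factorial_succ]
    ring
  have h3 : ((3 * (m + 1)).factorial : ℚ)
      = (3 * m + 1) * (3 * m + 2) * (3 * m + 3) * (3 * m).factorial := by
    rw [show 3 * (m + 1) = 3 * m + 2 + 1 by ring]
    push_cast [Nat.factorial_succ]
    ring
  simp only [b0coeff, h6, h2, h3]
  field_simp
  ring

lemma b1coeff_succ (m : ℕ) :
    b1coeff (m + 1) = b0coeff (m + 1) + 144 * (6 * m + 1) * b0coeff m := by
  have hm : (1 : ℚ) - 6 * (m + 1 : ℕ) ≠ 0 := by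
    push_cast
    linarith [(m.cast_nonneg : (0 : ℚ) ≤ m)]
  have hb1 : b1coeff (m + 1) = (1 + 6 * (m + 1 : ℕ)) / (1 - 6 * (m + 1 : ℕ)) * b0coeff (m + 1) := by
    simp only [b1coeff, b0coeff]
    ring
  rw [hb1]
  field_simp
  push_cast
  linear_combination (12 : ℚ) * b0coeff_succ m

namespace PowerSeries

variable {R : Type*} [CommRing R]

lemma coeff_X_mul_derivative (f : R⟦X⟧) (n : ℕ) :
    coeff n (X * d⁄dX R f) = n * coeff n f := by
  cases n with
  | zero => simp
  | succ n => rw [coeff_succ_X_mul, coeff_derivative, mul_comm, Nat.cast_succ]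

lemma coeff_ofNat_mul (k : ℕ) [k.AtLeastTwo] (f : R⟦X⟧) (n : ℕ) :
    coeff n ((ofNat(k) : R⟦X⟧) * f) = ofNat(k) * coeff n f := by
  rw [← map_ofNat C, coeff_C_mul]

lemma derivative_rescale (a : R) (f : R⟦X⟧) :
    d⁄dX R (rescale a f) = C a * rescale a (d⁄dX R f) := by
  ext n
  simp only [coeff_derivative, coeff_rescale, coeff_C_mul]
  ring

lemma rescale_neg_one_derivative (f : R⟦X⟧) :
    rescale (-1) (d⁄dX R f) = -d⁄dX R (rescale (-1) f) := by
  rw [derivative_rescale, map_neg, map_one, neg_one_mul, neg_neg]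

lemma C_mul_rescale_eq_of_mul_eq {w a b : R} (h : w * a = w * b) (f : R⟦X⟧) :
    C w * rescale a f = C w * rescale b f := by
  have hpow (n : ℕ) : w * a ^ n = w * b ^ n := by
    induction n with
    | zero => simp
    | succ n ih => linear_combination a * ih + b ^ n * h
  ext n
  simp only [coeff_C_mul, coeff_rescale, ← mul_assoc, hpow]

theorem C_add_sub_sub_eq_zero_of_mul_rescale_neg_one_add {z₁ z₂ : R} (h2 : IsUnit (2 : R))
    (h₁ : z₁ ^ 2 = 1) (h₂ : z₂ ^ 2 = 1) {P V : R⟦X⟧}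
    (hPV : P * rescale (-1) V + rescale (-1) P * V = 2) :
    C (z₁ + z₂) - C z₂ * (rescale z₁ P * rescale (-z₂) V)
      - C z₁ * (rescale z₁ V * rescale (-z₂) P) = 0 := by
  set D := C (z₁ + z₂) - C z₂ * (rescale z₁ P * rescale (-z₂) V)
      - C z₁ * (rescale z₁ V * rescale (-z₂) P)
  have hC₁ : C z₁ ^ 2 = 1 := by rw [← map_pow, h₁, map_one]
  have hC₂ : C z₂ ^ 2 = 1 := by rw [← map_pow, h₂, map_one]
  have hkey : rescale z₁ P * rescale (-z₁) V + rescale z₁ V * rescale (-z₁) P = 2 := by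
    have := congrArg (rescale z₁) hPV
    simp only [map_add, map_mul, rescale_rescale, neg_one_mul, map_ofNat] at this
    linear_combination this
  -- After multiplying by `z₁ + z₂` one may replace `z₂` by `z₁`, after multiplying by `z₁ - z₂`
  -- by `-z₁`; and `z₁ (z₁ + z₂) + z₁ (z₁ - z₂) = 2` is a unit.
  have hplus : C (z₁ + z₂) * D = 0 := by
    have hV := C_mul_rescale_eq_of_mul_eq (w := z₁ + z₂) (a := -z₂) (b := -z₁)
      (by linear_combination h₁ - h₂) V
    have hP := C_mul_rescale_eq_of_mul_eq (w := z₁ + z₂) (a := -z₂) (b := -z₁)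
      (by linear_combination h₁ - h₂) P
    simp only [D, map_add] at hV hP ⊢
    linear_combination (-C z₂ * rescale z₁ P) * hV + (-C z₁ * rescale z₁ V) * hP
      + (-C z₁ * (C z₁ + C z₂)) * hkey + (1 - rescale z₁ P * rescale (-z₁) V) * (hC₂ - hC₁)
  have hminus : C (z₁ - z₂) * D = 0 := by
    have hV := C_mul_rescale_eq_of_mul_eq (w := z₁ - z₂) (a := -z₂) (b := z₁)
      (by linear_combination h₂ - h₁) V
    have hP := C_mul_rescale_eq_of_mul_eq (w := z₁ - z₂) (a := -z₂) (b := z₁)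
      (by linear_combination h₂ - h₁) P
    simp only [D, map_add, map_sub] at hV hP ⊢
    linear_combination (-C z₂ * rescale z₁ P) * hV + (-C z₁ * rescale z₁ V) * hP
      + (1 - rescale z₁ P * rescale z₁ V) * (hC₁ - hC₂)
  have h2D : C 2 * D = 0 := by
    simp only [map_add, map_sub, map_ofNat] at hplus hminus ⊢
    linear_combination C z₁ * hplus + C z₁ * hminus - 2 * D * hC₁
  exact (h2.map C).mul_right_eq_zero.mp h2D

noncomputable def B0 : ℚ⟦X⟧ := mk b0coeff

noncomputable def B1 : ℚ⟦X⟧ := mk b1coeff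

lemma B0_ode : d⁄dX ℚ (B0 + 432 * X ^ 2 * d⁄dX ℚ B0) = -60 * B0 := by
  ext n
  rw [pow_two, mul_assoc, mul_assoc, coeff_derivative, map_add, neg_mul, map_neg,
    coeff_ofNat_mul, coeff_ofNat_mul, coeff_succ_X_mul, coeff_X_mul_derivative]
  simp only [B0, coeff_mk]
  linear_combination b0coeff_succ n

lemma B1_eq : B1 = B0 + 144 * X * B0 + 864 * X ^ 2 * d⁄dX ℚ B0 := by
  ext n
  cases n with
  | zero => simp [B0, B1, b0coeff, b1coeff]
  | succ n =>
    rw [pow_two, mul_assoc, mul_assoc, mul_assoc, map_add, map_add, coeff_ofNat_mul,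
      coeff_ofNat_mul, coeff_succ_X_mul, coeff_succ_X_mul, coeff_X_mul_derivative]
    simp only [B0, B1, coeff_mk]
    linear_combination b1coeff_succ n

lemma rescale_neg_one_B0_ode :
    d⁄dX ℚ (rescale (-1) B0 - 432 * X ^ 2 * d⁄dX ℚ (rescale (-1) B0)) = 60 * rescale (-1) B0 := by
  have h := congrArg (rescale (-1 : ℚ)) B0_ode
  have e : rescale (-1) (B0 + 432 * X ^ 2 * d⁄dX ℚ B0)
      = rescale (-1) B0 - 432 * X ^ 2 * d⁄dX ℚ (rescale (-1) B0) := by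
    simp only [map_add, map_mul, map_pow, map_ofNat, rescale_neg_one_X, rescale_neg_one_derivative]
    ring
  rw [rescale_neg_one_derivative, e, map_mul, map_neg, map_ofNat] at h
  linear_combination -h

lemma B0_wronskian :
    B0 * rescale (-1) B0
      + 432 * X ^ 2 * (rescale (-1) B0 * d⁄dX ℚ B0 - B0 * d⁄dX ℚ (rescale (-1) B0)) = 1 := by
  set f := B0
  set g := rescale (-1 : ℚ) B0
  apply derivative.ext
  · have hf := B0_ode
    have hg := rescale_neg_one_B0_ode
    rw [show f * g + 432 * X ^ 2 * (g * d⁄dX ℚ f - f * d⁄dX ℚ g)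
        = f * (g - 432 * X ^ 2 * d⁄dX ℚ g) + g * (f + 432 * X ^ 2 * d⁄dX ℚ f) - f * g by ring]
    rw [map_sub, map_add, Derivation.leibniz, Derivation.leibniz, Derivation.leibniz, hf, hg,
      derivative_one]
    simp only [smul_eq_mul]
    ring
  · simp [f, g, B0, b0coeff, rescale_mk]

theorem B0_mul_rescale_neg_one_B1_add : B0 * rescale (-1) B1 + rescale (-1) B0 * B1 = 2 := by
  have h : rescale (-1) B1
      = rescale (-1) B0 - 144 * X * rescale (-1) B0 - 864 * X ^ 2 * d⁄dX ℚ (rescale (-1) B0) := by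
    rw [B1_eq]
    simp only [map_add, map_mul, map_pow, map_ofNat, rescale_neg_one_X, rescale_neg_one_derivative]
    ring
  rw [h, B1_eq]
  linear_combination 2 * B0_wronskian

end PowerSeries

namespace MvPowerSeries

open Finset.HasAntidiagonal

variable {R : Type*} [CommRing R]

noncomputable def bideg (i j : ℕ) : Fin 2 →₀ ℕ := Finsupp.single 0 i + Finsupp.single 1 j

@[simp] lemma bideg_apply_zero (i j : ℕ) : bideg i j 0 = i := by simp [bideg]

@[simp] lemma bideg_apply_one (i j : ℕ) : bideg i j 1 = j := by simp [bideg]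

lemma fin_two_finsupp_ext {e e' : Fin 2 →₀ ℕ} (h₀ : e 0 = e' 0) (h₁ : e 1 = e' 1) : e = e' := by
  ext i
  fin_cases i
  exacts [h₀, h₁]

lemma bideg_apply_self (e : Fin 2 →₀ ℕ) : bideg (e 0) (e 1) = e := fin_two_finsupp_ext (by simp) (by simp)

noncomputable def ofZ (f : PowerSeries R) : MvPowerSeries (Fin 2) R :=
  fun e => if e 1 = 0 then PowerSeries.coeff (e 0) f else 0

noncomputable def ofW (f : PowerSeries R) : MvPowerSeries (Fin 2) R :=
  fun e => if e 0 = 0 then PowerSeries.coeff (e 1) f else 0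

lemma coeff_ofZ_mul_ofW (f g : PowerSeries R) (e : Fin 2 →₀ ℕ) :
    coeff e (ofZ f * ofW g) = PowerSeries.coeff (e 0) f * PowerSeries.coeff (e 1) g := by
  rw [coeff_mul, Finset.sum_eq_single (bideg (e 0) 0, bideg 0 (e 1))]
  · simp [coeff_apply, ofZ, ofW]
  · rintro ⟨p, p'⟩ hp hne
    rw [mem_antidiagonal] at hp
    simp only [coeff_apply, ofZ, ofW, mul_ite, ite_mul, zero_mul, mul_zero]
    split_ifs with hp' hp'' <;> try rfl
    refine absurd ?_ hne
    have h₀ := congrArg (· 0) hp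
    have h₁ := congrArg (· 1) hp
    simp only [Finsupp.add_apply] at h₀ h₁
    rw [Prod.mk.injEq]
    constructor <;> apply fin_two_finsupp_ext <;> simp <;> omega
  · intro h
    refine absurd ?_ h
    rw [mem_antidiagonal]
    exact fin_two_finsupp_ext (by simp) (by simp)

/-- The substitution `Z ↦ T`, `W ↦ -T`. -/
noncomputable def substNegDiag : MvPowerSeries (Fin 2) R →ₗ[R] PowerSeries R where
  toFun f := PowerSeries.mk fun n => ∑ p ∈ antidiagonal n, (-1) ^ p.2 * coeff (bideg p.1 p.2) f
  map_add' f g := by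
    ext n
    simp [mul_add, Finset.sum_add_distrib]
  map_smul' a f := by
    ext n
    simp [Finset.mul_sum, mul_left_comm]

lemma coeff_substNegDiag (f : MvPowerSeries (Fin 2) R) (n : ℕ) :
    PowerSeries.coeff n (substNegDiag f)
      = ∑ p ∈ antidiagonal n, (-1) ^ p.2 * coeff (bideg p.1 p.2) f := by
  simp [substNegDiag]

lemma substNegDiag_C (a : R) : substNegDiag (C a) = PowerSeries.C a := by
  ext n
  rw [coeff_substNegDiag, PowerSeries.coeff_C]
  cases n with
  | zero => simp [bideg]
  | succ n =>
    refine Finset.sum_eq_zero fun p hp => ?_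
    rw [coeff_C, if_neg, mul_zero]
    intro h
    have h₀ : p.1 = 0 := by simpa using congrArg (· 0) h
    have h₁ : p.2 = 0 := by simpa using congrArg (· 1) h
    rw [mem_antidiagonal, h₀, h₁] at hp
    exact n.succ_ne_zero hp.symm

lemma substNegDiag_ofZ_mul_ofW (f g : PowerSeries R) :
    substNegDiag (ofZ f * ofW g) = f * PowerSeries.rescale (-1) g := by
  ext n
  simp only [coeff_substNegDiag, coeff_ofZ_mul_ofW, PowerSeries.coeff_mul,
    PowerSeries.coeff_rescale, bideg_apply_zero, bideg_apply_one]
  exact Finset.sum_congr rfl fun p _ => by ring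

lemma coeff_bideg_succ_X_zero_mul (a b : ℕ) (q : MvPowerSeries (Fin 2) R) :
    coeff (bideg (a + 1) b) (X 0 * q) = coeff (bideg a b) q := by
  rw [show bideg (a + 1) b = Finsupp.single 0 1 + bideg a b from
    fin_two_finsupp_ext (by simp [add_comm]) (by simp), X_def, coeff_add_monomial_mul, one_mul]

lemma coeff_bideg_succ_X_one_mul (a b : ℕ) (q : MvPowerSeries (Fin 2) R) :
    coeff (bideg a (b + 1)) (X 1 * q) = coeff (bideg a b) q := by
  rw [show bideg a (b + 1) = Finsupp.single 1 1 + bideg a b from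
    fin_two_finsupp_ext (by simp) (by simp [add_comm]), X_def, coeff_add_monomial_mul, one_mul]

lemma coeff_bideg_zero_X_zero_mul (b : ℕ) (q : MvPowerSeries (Fin 2) R) :
    coeff (bideg 0 b) (X 0 * q) = 0 := by
  rw [X_def, coeff_monomial_mul, if_neg]
  simp [Finsupp.single_le_iff]

lemma coeff_bideg_zero_X_one_mul (a : ℕ) (q : MvPowerSeries (Fin 2) R) :
    coeff (bideg a 0) (X 1 * q) = 0 := by
  rw [X_def, coeff_monomial_mul, if_neg]
  simp [Finsupp.single_le_iff]

theorem X_zero_add_X_one_dvd_of_substNegDiag_eq_zero {f : MvPowerSeries (Fin 2) R}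
    (hf : substNegDiag f = 0) : X 0 + X 1 ∣ f := by
  -- `s a b` is the alternating sum of the coefficients of `f` from `(a, b)` to `(0, a + b)`.
  let s (a b : ℕ) : R := ∑ p ∈ antidiagonal a, (-1) ^ p.2 * coeff (bideg p.1 (b + p.2)) f
  have hs_zero (b : ℕ) : s 0 b = coeff (bideg 0 b) f := by simp [s]
  have hs_succ (a b : ℕ) : s (a + 1) b = coeff (bideg (a + 1) b) f - s a (b + 1) := by
    simp only [s, Finset.Nat.sum_antidiagonal_succ', pow_succ, add_zero, pow_zero, one_mul,
      mul_neg_one, neg_mul, Finset.sum_neg_distrib, ← add_assoc, add_right_comm b]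
    ring
  have hs_diag (a : ℕ) : s a 0 = 0 := by
    simpa [s, coeff_substNegDiag] using congrArg (PowerSeries.coeff a) hf
  let q : MvPowerSeries (Fin 2) R := fun e => s (e 0) (e 1 + 1)
  have hq (a b : ℕ) : coeff (bideg a b) q = s a (b + 1) := by
    show s (bideg a b 0) (bideg a b 1 + 1) = _
    rw [bideg_apply_zero, bideg_apply_one]
  refine ⟨q, ?_⟩
  ext e
  rw [← bideg_apply_self e, add_mul, map_add]
  generalize e 0 = a, e 1 = b
  cases a <;> cases b <;>
    simp only [coeff_bideg_succ_X_zero_mul, coeff_bideg_succ_X_one_mul, coeff_bideg_zero_X_zero_mul,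
      coeff_bideg_zero_X_one_mul, hq, add_zero, zero_add]
  case zero.zero => rw [← hs_zero, hs_diag]
  case zero.succ b => rw [hs_zero]
  case succ.zero a => linear_combination hs_diag (a + 1) - hs_succ a 0
  case succ.succ a b => linear_combination -hs_succ a (b + 1)

end MvPowerSeries

section

open PowerSeries (rescale B0 B1)

variable {A : Type} [CommRing A] [Algebra ℚ A] (z₁ z₂ : A)

lemma B0Z_eq : B0Z A z₁ = ofZ (rescale z₁ (B0.map (algebraMap ℚ A))) := by
  funext e
  simp [B0Z, ofZ, B0, PowerSeries.coeff_rescale]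

lemma B1Z_eq : B1Z A z₁ = ofZ (rescale z₁ (B1.map (algebraMap ℚ A))) := by
  funext e
  simp [B1Z, ofZ, B1, PowerSeries.coeff_rescale]

lemma B0W_eq : B0W A z₂ = ofW (rescale z₂ (B0.map (algebraMap ℚ A))) := by
  funext e
  simp [B0W, ofW, B0, PowerSeries.coeff_rescale]

lemma B1W_eq : B1W A z₂ = ofW (rescale z₂ (B1.map (algebraMap ℚ A))) := by
  funext e
  simp [B1W, ofW, B1, PowerSeries.coeff_rescale]

lemma substNegDiag_edgeNumerator :
    substNegDiag (edgeNumerator A z₁ z₂) = PowerSeries.C (z₁ + z₂)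
      - PowerSeries.C z₂
          * (rescale z₁ (B0.map (algebraMap ℚ A)) * rescale (-z₂) (B1.map (algebraMap ℚ A)))
      - PowerSeries.C z₁
          * (rescale z₁ (B1.map (algebraMap ℚ A)) * rescale (-z₂) (B0.map (algebraMap ℚ A))) := by
  rw [edgeNumerator, B0Z_eq, B1Z_eq, B0W_eq, B1W_eq, mul_right_comm, mul_comm _ (C z₂), mul_assoc,
    ← smul_eq_C_mul, ← smul_eq_C_mul, map_sub, map_sub, map_smul, map_smul, substNegDiag_C,
    substNegDiag_ofZ_mul_ofW, substNegDiag_ofZ_mul_ofW, PowerSeries.rescale_rescale,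
    PowerSeries.rescale_rescale, mul_neg_one, PowerSeries.smul_eq_C_mul, PowerSeries.smul_eq_C_mul]

end

theorem edgeNumerator_dvd (A : Type) [CommRing A] [Algebra ℚ A] (z₁ z₂ : A)
    (h₁ : z₁ ^ 2 = 1) (h₂ : z₂ ^ 2 = 1) :
    (MvPowerSeries.X (0 : Fin 2) + MvPowerSeries.X (1 : Fin 2)) ∣ edgeNumerator A z₁ z₂ := by
  apply X_zero_add_X_one_dvd_of_substNegDiag_eq_zero
  rw [substNegDiag_edgeNumerator]
  refine PowerSeries.C_add_sub_sub_eq_zero_of_mul_rescale_neg_one_add ?_ h₁ h₂ ?_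
  · simpa only [map_ofNat] using (IsUnit.mk0 (2 : ℚ) two_ne_zero).map (algebraMap ℚ A)
  · have h := congrArg (PowerSeries.map (algebraMap ℚ A)) PowerSeries.B0_mul_rescale_neg_one_B1_add
    rwa [map_add, map_mul, map_mul, ← PowerSeries.rescale_map, ← PowerSeries.rescale_map, map_neg,
      map_one, map_ofNat] at h
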